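/- Let N be a nest on a Hilbert space H containing a strictly increasing sequence of subspaces N₀ < N₁ < N₂ < ⋯. Then the left topological stable rank of the nest algebra T(N) is infinite. -/

import Mathlib

/-- `n`-tuples generating `A` as a left ideal. -/
noncomputable def Lg (A : Type*) [NormedRing A] (n : ℕ) : Set (Fin n → A) :=
  {a | ∃ b : Fin n → A, ∑ i, b i * a i = 1}

/-- `n`-tuples generating `A` as a right ideal. -/
noncomputable def Rg (A : Type*) [NormedRing A] (n : ℕ) : Set (Fin n → A) :=
  {a | ∃ b : Fin n → A, ∑ i, a i * b i = 1}

/-- The left topological stable rank. -/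
noncomputable def ltsr (A : Type*) [NormedRing A] : ℕ∞ :=
  sInf {N : ℕ∞ | ∃ n : ℕ, N = n ∧ Dense (Lg A n)}

/-- The right topological stable rank. -/
noncomputable def rtsr (A : Type*) [NormedRing A] : ℕ∞ :=
  sInf {N : ℕ∞ | ∃ n : ℕ, N = n ∧ Dense (Rg A n)}


/-- A nest: a chain of closed subspaces containing `{0}` and `H`, closed under
intersections and closed linear spans. -/
structure IsNest {H : Type*} [NormedAddCommGroup H] [InnerProductSpace ℂ H]
    (𝒩 : Set (Submodule ℂ H)) : Prop where
  isClosed : ∀ N ∈ 𝒩, IsClosed (N : Set H)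
  isChain : IsChain (· ≤ ·) 𝒩
  bot_mem : ⊥ ∈ 𝒩
  top_mem : ⊤ ∈ 𝒩
  sInf_mem : ∀ S ⊆ 𝒩, S.Nonempty → sInf S ∈ 𝒩
  span_mem : ∀ S ⊆ 𝒩, S.Nonempty → (sSup S).topologicalClosure ∈ 𝒩

/-- The nest algebra of all bounded operators leaving every subspace of `𝒩` invariant. -/
noncomputable def nestAlgebra {H : Type*} [NormedAddCommGroup H] [InnerProductSpace ℂ H]
    (𝒩 : Set (Submodule ℂ H)) : Subalgebra ℂ (H →L[ℂ] H) where
  carrier := {T | ∀ N ∈ 𝒩, ∀ x ∈ N, T x ∈ N}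
  mul_mem' := fun hT hS N hN x hx => hT N hN _ (hS N hN x hx)
  add_mem' := fun hT hS N hN x hx => N.add_mem (hT N hN x hx) (hS N hN x hx)
  algebraMap_mem' := fun c N hN x hx => by
    simpa [Algebra.algebraMap_eq_smul_one] using N.smul_mem c hx

/-!
Put `M 0 = 0` and `M (k + 1) = N k`, and take an orthonormal basis `f` of
`W = closure (⋃ k, M k)` made of Hilbert bases of the layers `M (k + 1) ⊖ M k`; all layers after
the first are nonzero, and by separability the basis is countable. Given `n`, move the basis
vectors injectively, with disjoint images for different `i < n`, to basis vectors `f (Ψ i d)` in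
strictly later layers, missing one basis vector `e` of the second layer. The partial isometries
`S i : f (Ψ i d) ↦ f d` lie in the nest algebra, since a nest element separates `f (Ψ i d)` from
`f d`, and with `D i = (S i)⋆` they satisfy `S j (D i y) = δᵢⱼ y` on `W ∈ 𝒩` and `S j e = 0`.
No `n`-tuple near `(S i)` is left invertible, because it has a common nonzero zero in `W`.
-/

open scoped InnerProductSpace
open Submodule

section Orthonormal

variable {𝕜 E ι : Type*} [RCLike 𝕜] [NormedAddCommGroup E] [InnerProductSpace 𝕜 E]

/-- Distinct vectors of an orthonormal family are `√2` apart, so the balls of radius `1 / 2`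
around them are disjoint. -/
theorem Orthonormal.countable [TopologicalSpace.SeparableSpace E] {v : ι → E}
    (hv : Orthonormal 𝕜 v) : Countable ι := by
  refine Pairwise.countable_of_isOpen_disjoint (s := fun i => Metric.ball (v i) (1 / 2))
    (fun i j hij => Metric.ball_disjoint_ball ?_) (fun _ => Metric.isOpen_ball)
    (fun i => ⟨v i, Metric.mem_ball_self one_half_pos⟩)
  have hsq : ‖v i - v j‖ ^ 2 = 2 := by
    rw [@norm_sub_sq 𝕜, hv.1 i, hv.1 j, hv.2 hij]
    norm_num
  rw [dist_eq_norm]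
  nlinarith [norm_nonneg (v i - v j)]

end Orthonormal

section PartialIsometry

variable {𝕜 E F G ι : Type*} [RCLike 𝕜]
  [NormedAddCommGroup E] [InnerProductSpace 𝕜 E]
  [NormedAddCommGroup F] [InnerProductSpace 𝕜 F] [CompleteSpace F]
  [NormedAddCommGroup G] [InnerProductSpace 𝕜 G] [CompleteSpace G]
  {u : ι → E} {v : ι → F}

theorem summable_inner_smul (hu : Orthonormal 𝕜 u) (hv : Orthonormal 𝕜 v) (x : E) :
    Summable fun i => ⟪u i, x⟫_𝕜 • v i := by
  simpa using (hv.orthogonalFamily.summable_iff_norm_sq_summable fun i => ⟪u i, x⟫_𝕜).2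
    (hu.inner_products_summable x)

theorem norm_tsum_inner_smul_le (hu : Orthonormal 𝕜 u) (hv : Orthonormal 𝕜 v) (x : E) :
    ‖∑' i, ⟪u i, x⟫_𝕜 • v i‖ ≤ ‖x‖ := by
  refine le_of_tendsto (summable_inner_smul hu hv x).hasSum.norm
    (Filter.Eventually.of_forall fun s => ?_)
  have hsum : ‖∑ i ∈ s, ⟪u i, x⟫_𝕜 • v i‖ ^ 2 = ∑ i ∈ s, ‖⟪u i, x⟫_𝕜‖ ^ 2 := by
    simpa using hv.orthogonalFamily.norm_sum (fun i => ⟪u i, x⟫_𝕜) s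
  have hbessel := hu.sum_inner_products_le x (s := s)
  nlinarith [norm_nonneg (∑ i ∈ s, ⟪u i, x⟫_𝕜 • v i), norm_nonneg x]

noncomputable def partialIsometry (hu : Orthonormal 𝕜 u) (hv : Orthonormal 𝕜 v) : E →L[𝕜] F :=
  LinearMap.mkContinuous
    { toFun := fun x => ∑' i, ⟪u i, x⟫_𝕜 • v i
      map_add' := fun x y => by
        simp only [inner_add_right, add_smul]
        exact (summable_inner_smul hu hv x).tsum_add (summable_inner_smul hu hv y)
      map_smul' := fun c x => by
        simp only [inner_smul_right, ← smul_smul, RingHom.id_apply]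
        exact (summable_inner_smul hu hv x).tsum_const_smul c }
    1 (fun x => by simpa using norm_tsum_inner_smul_le hu hv x)

theorem partialIsometry_apply (hu : Orthonormal 𝕜 u) (hv : Orthonormal 𝕜 v) (x : E) :
    partialIsometry hu hv x = ∑' i, ⟪u i, x⟫_𝕜 • v i := rfl

theorem norm_partialIsometry_le (hu : Orthonormal 𝕜 u) (hv : Orthonormal 𝕜 v) :
    ‖partialIsometry hu hv‖ ≤ 1 :=
  LinearMap.mkContinuous_norm_le _ zero_le_one _

theorem inner_partialIsometry_apply (hu : Orthonormal 𝕜 u) (hv : Orthonormal 𝕜 v) (y : F)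
    (x : E) : ⟪y, partialIsometry hu hv x⟫_𝕜 = ∑' i, ⟪u i, x⟫_𝕜 * ⟪y, v i⟫_𝕜 := by
  rw [partialIsometry_apply]
  simpa [inner_smul_right] using (innerSL 𝕜 y).map_tsum (summable_inner_smul hu hv x)

theorem inner_partialIsometry_apply_self (hu : Orthonormal 𝕜 u) (hv : Orthonormal 𝕜 v) (j : ι)
    (x : E) : ⟪v j, partialIsometry hu hv x⟫_𝕜 = ⟪u j, x⟫_𝕜 := by
  rw [inner_partialIsometry_apply, tsum_eq_single j fun i hij => by simp [hv.2 (Ne.symm hij)]]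
  simp [inner_self_eq_norm_sq_to_K, hv.1 j]

theorem partialIsometry_apply_eq_zero (hu : Orthonormal 𝕜 u) (hv : Orthonormal 𝕜 v) {x : E}
    (hx : ∀ i, ⟪u i, x⟫_𝕜 = 0) : partialIsometry hu hv x = 0 := by
  simp [partialIsometry_apply, hx]

theorem partialIsometry_apply_mem (hu : Orthonormal 𝕜 u) (hv : Orthonormal 𝕜 v) {x : E}
    {K : Submodule 𝕜 F} (hK : IsClosed (K : Set F)) (h : ∀ i, ⟪u i, x⟫_𝕜 = 0 ∨ v i ∈ K) :
    partialIsometry hu hv x ∈ K := by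
  refine hK.mem_of_tendsto (summable_inner_smul hu hv x).hasSum
    (Filter.Eventually.of_forall fun s => K.sum_mem fun i _ => ?_)
  rcases h i with h0 | hmem
  · simp [h0]
  · exact K.smul_mem _ hmem

theorem partialIsometry_partialIsometry_apply {w : ι → G} (hu : Orthonormal 𝕜 u)
    (hv : Orthonormal 𝕜 v) (hw : Orthonormal 𝕜 w) (x : E) :
    partialIsometry hv hw (partialIsometry hu hv x) = partialIsometry hu hw x := by
  simp only [partialIsometry_apply hv hw, inner_partialIsometry_apply_self]
  rfl

theorem partialIsometry_partialIsometry_apply_eq_zero {ι' : Type*} {u' : ι' → F} {w : ι' → G}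
    (hu : Orthonormal 𝕜 u) (hv : Orthonormal 𝕜 v) (hu' : Orthonormal 𝕜 u')
    (hw : Orthonormal 𝕜 w) (h : ∀ i j, ⟪u' i, v j⟫_𝕜 = 0) (x : E) :
    partialIsometry hu' hw (partialIsometry hu hv x) = 0 :=
  partialIsometry_apply_eq_zero hu' hw fun i => by simp [inner_partialIsometry_apply, h]

theorem partialIsometry_self_apply {u : ι → F} (hu : Orthonormal 𝕜 u) {x : F}
    (hx : x ∈ (span 𝕜 (Set.range u)).topologicalClosure) : partialIsometry hu hu x = x := by
  have hker : (span 𝕜 (Set.range u)).topologicalClosure ≤ (partialIsometry hu hu - 1).ker := by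
    refine topologicalClosure_minimal _ (span_le.2 ?_) (ContinuousLinearMap.isClosed_ker _)
    rintro - ⟨j, rfl⟩
    have : partialIsometry hu hu (u j) = u j := by
      rw [partialIsometry_apply, tsum_eq_single j fun i hij => by simp [hu.2 hij]]
      simp [inner_self_eq_norm_sq_to_K, hu.1 j]
    simp [this]
  simpa [sub_eq_zero] using hker hx

end PartialIsometry

section LeftInvertible

variable {𝕜 E : Type*} [NontriviallyNormedField 𝕜] [NormedAddCommGroup E] [NormedSpace 𝕜 E]
  [CompleteSpace E] {n : ℕ}

/-- With `R = ∑ i, D i ∘ (a i - S i)` of norm `< 1`, the vector `x = (1 + R)⁻¹ e` works: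
applying `S j` to `x + R x = e` leaves `a j x = S j e = 0`. -/
theorem exists_ne_zero_forall_apply_eq_zero {W : Submodule 𝕜 E} {S D a : Fin n → E →L[𝕜] E}
    {e : E} (hD : ∀ i, ‖D i‖ ≤ 1) (hDW : ∀ i y, D i y ∈ W) (hSW : ∀ j, ∀ y ∈ W, S j y ∈ W)
    (haW : ∀ j, ∀ y ∈ W, a j y ∈ W)
    (hSD : ∀ i j, ∀ y ∈ W, S j (D i y) = if i = j then y else 0)
    (heW : e ∈ W) (he : e ≠ 0) (hSe : ∀ j, S j e = 0) (ha : ∑ i, ‖a i - S i‖ < 1) :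
    ∃ x ≠ 0, ∀ j, a j x = 0 := by
  set R : E →L[𝕜] E := ∑ i, D i ∘L (a i - S i)
  have hR : ‖-R‖ < 1 := by
    rw [norm_neg]
    calc ‖R‖ ≤ ∑ i, ‖D i ∘L (a i - S i)‖ := norm_sum_le _ _
      _ ≤ ∑ i, ‖a i - S i‖ := Finset.sum_le_sum fun i _ =>
          (ContinuousLinearMap.opNorm_comp_le _ _).trans
            (mul_le_of_le_one_left (norm_nonneg _) (hD i))
      _ < 1 := ha
  set x := (↑(Units.oneSub (-R) hR)⁻¹ : E →L[𝕜] E) e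
  have hx : x + R x = e := by
    have := congrArg (· e) (Units.oneSub (-R) hR).mul_inv
    simpa [sub_neg_eq_add, add_mul] using this
  have hxW : x ∈ W := by
    rw [← add_sub_cancel_right x (R x), hx]
    refine W.sub_mem heW ?_
    rw [sum_apply]
    exact W.sum_mem fun i _ => hDW i _
  have hSR : ∀ j, S j (R x) = a j x - S j x := fun j => by
    have hdiff : ∀ i, a i x - S i x ∈ W := fun i => W.sub_mem (haW i x hxW) (hSW i x hxW)
    simp only [R, sum_apply, map_sum, ContinuousLinearMap.comp_apply,
      sub_apply, hSD _ j _ (hdiff _), Finset.sum_ite_eq', Finset.mem_univ,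
      if_true]
  refine ⟨x, fun h0 => he (by simpa [h0] using hx.symm), fun j => ?_⟩
  simpa [hSe, hSR] using congrArg (S j) hx

theorem not_mem_closure_Lg {A : Subalgebra 𝕜 (E →L[𝕜] E)} {W : Submodule 𝕜 E}
    (hAW : ∀ T ∈ A, ∀ y ∈ W, T y ∈ W) {S D : Fin n → E →L[𝕜] E} (hSA : ∀ i, S i ∈ A)
    (hD : ∀ i, ‖D i‖ ≤ 1) (hDW : ∀ i y, D i y ∈ W)
    (hSD : ∀ i j, ∀ y ∈ W, S j (D i y) = if i = j then y else 0)
    {e : E} (heW : e ∈ W) (he : e ≠ 0) (hSe : ∀ j, S j e = 0) :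
    (fun i => (⟨S i, hSA i⟩ : A)) ∉ closure (Lg A n) := by
  intro hcl
  obtain ⟨a, ⟨b, hb⟩, hdist⟩ :=
    Metric.mem_closure_iff.1 hcl (n + 1 : ℝ)⁻¹ (by positivity)
  have hclose : ∀ i, ‖(a i : E →L[𝕜] E) - S i‖ < (n + 1 : ℝ)⁻¹ := fun i => by
    have := (dist_le_pi_dist _ a i).trans_lt hdist
    rwa [dist_comm, Subtype.dist_eq, dist_eq_norm] at this
  have ha : ∑ i, ‖(a i : E →L[𝕜] E) - S i‖ < 1 :=
    calc ∑ i, ‖(a i : E →L[𝕜] E) - S i‖ ≤ ∑ _i : Fin n, (n + 1 : ℝ)⁻¹ :=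
          Finset.sum_le_sum fun i _ => (hclose i).le
      _ = n / (n + 1) := by simp [div_eq_mul_inv]
      _ < 1 := by rw [div_lt_one (by positivity)]; linarith
  obtain ⟨x, hx, hax⟩ := exists_ne_zero_forall_apply_eq_zero hD hDW
    (fun j => hAW _ (hSA j)) (fun j => hAW _ (a j).2) hSD heW he hSe ha
  apply hx
  simpa [hax] using (congrArg (fun T : A => (T : E →L[𝕜] E) x) hb).symm

end LeftInvertible
section Layers

variable {𝕜 E : Type*} [RCLike 𝕜] [NormedAddCommGroup E] [InnerProductSpace 𝕜 E]

theorem HilbertBasis.nonempty_index {ι : Type*} [Nontrivial E] (b : HilbertBasis ι 𝕜 E) :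
    Nonempty ι := by
  by_contra hι
  rw [not_nonempty_iff] at hι
  obtain ⟨x, hx⟩ := exists_ne (0 : E)
  exact hx ((b.hasSum_repr x).unique hasSum_empty)

def nestLayer (M : ℕ → Submodule 𝕜 E) (k : ℕ) : Submodule 𝕜 E :=
  M (k + 1) ⊓ (M k)ᗮ

variable {M : ℕ → Submodule 𝕜 E}

theorem nestLayer_le (k : ℕ) : nestLayer M k ≤ M (k + 1) := inf_le_left

theorem nestLayer_le_orthogonal (k : ℕ) : nestLayer M k ≤ (M k)ᗮ := inf_le_right

theorem sup_nestLayer (hM : Monotone M) (k : ℕ) [(M k).HasOrthogonalProjection] :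
    M k ⊔ nestLayer M k = M (k + 1) := by
  rw [nestLayer, inf_comm]
  exact sup_orthogonal_inf_of_hasOrthogonalProjection (hM k.le_succ)

theorem nestLayer_ne_bot (hM : Monotone M) {k : ℕ} [(M k).HasOrthogonalProjection]
    (hlt : M k < M (k + 1)) : nestLayer M k ≠ ⊥ := by
  intro hbot
  have := sup_nestLayer hM k
  rw [hbot, sup_bot_eq] at this
  exact hlt.ne this

theorem pairwise_isOrtho_nestLayer (hM : Monotone M) :
    Pairwise fun k l => nestLayer M k ⟂ nestLayer M l := by
  have hlt : ∀ {k l}, k < l → nestLayer M l ⟂ nestLayer M k := fun {k l} hkl =>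
    isOrtho_iff_le.2 <| (nestLayer_le_orthogonal l).trans <|
      orthogonal_le <| (nestLayer_le k).trans (hM hkl)
  intro k l hkl
  rcases hkl.lt_or_gt with h | h
  · exact (hlt h).symm
  · exact hlt h

variable {w : ℕ → Type*} (b : ∀ k, HilbertBasis (w k) 𝕜 (nestLayer M k))

noncomputable def layerFamily : (Σ k, w k) → E := fun a => b a.1 a.2

theorem layerFamily_mem (a : Σ k, w k) : layerFamily b a ∈ nestLayer M a.1 :=
  (b a.1 a.2).2

theorem orthonormal_layerFamily (hM : Monotone M) : Orthonormal 𝕜 (layerFamily b) :=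
  (orthogonalFamily_iff_pairwise.2 (pairwise_isOrtho_nestLayer hM)).orthonormal_sigma_orthonormal
    fun k => (b k).orthonormal

theorem nestLayer_le_closure_span_layerFamily (k : ℕ) :
    nestLayer M k ≤ (span 𝕜 (Set.range (layerFamily b))).topologicalClosure := by
  intro x hx
  refine (isClosed_topologicalClosure _).mem_of_tendsto
    (((b k).hasSum_repr ⟨x, hx⟩).mapL (nestLayer M k).subtypeL)
    (Filter.Eventually.of_forall fun s => ?_)
  refine le_topologicalClosure _ (sum_mem fun i _ => ?_)
  exact smul_mem _ _ (subset_span ⟨⟨k, i⟩, rfl⟩)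

theorem le_closure_span_layerFamily (hM : Monotone M) (hM0 : M 0 = ⊥)
    [∀ k, (M k).HasOrthogonalProjection] (k : ℕ) :
    M k ≤ (span 𝕜 (Set.range (layerFamily b))).topologicalClosure := by
  induction k with
  | zero => simp [hM0]
  | succ k ih =>
    rw [← sup_nestLayer hM k]
    exact sup_le ih (nestLayer_le_closure_span_layerFamily b k)

end Layers

section Nest

theorem exists_injective_uncurry_add_two_le {ι D : Type*} [Countable ι] [Countable D]
    (β : D → ℕ) (g : ℕ → D) (hg : ∀ c, β (g c) = c + 1) :
    ∃ Ψ : ι → D → D, Function.Injective (Function.uncurry Ψ) ∧ ∀ i d, β d + 2 ≤ β (Ψ i d) := by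
  obtain ⟨enc, henc⟩ := exists_injective_nat (ι × D)
  refine ⟨fun i d => g (Nat.pair (β d) (enc (i, d)) + 1), fun p q hpq => henc ?_, fun i d => ?_⟩
  · have := congrArg β hpq
    simp only [Function.uncurry, hg, add_left_inj, Nat.pair_eq_pair] at this
    exact this.2
  · simp only [hg]
    have := Nat.left_le_pair (β d) (enc (i, d))
    omega

variable {H : Type*} [NormedAddCommGroup H] [InnerProductSpace ℂ H] [CompleteSpace H]
  {𝒩 : Set (Submodule ℂ H)}

theorem partialIsometry_mem_nestAlgebra (h𝒩 : IsNest 𝒩) {ι : Type*} {u v : ι → H}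
    (hu : Orthonormal ℂ u) (hv : Orthonormal ℂ v) (K : ι → Submodule ℂ H) (hK : ∀ i, K i ∈ 𝒩)
    (huK : ∀ i, u i ∈ (K i)ᗮ) (hvK : ∀ i, v i ∈ K i) :
    partialIsometry hu hv ∈ nestAlgebra 𝒩 := by
  intro L hL x hx
  refine partialIsometry_apply_mem hu hv (h𝒩.isClosed L hL) fun i => ?_
  rcases h𝒩.isChain.total hL (hK i) with hle | hge
  · exact Or.inl (inner_left_of_mem_orthogonal (hle hx) (huK i))
  · exact Or.inr (hge (hvK i))

theorem not_dense_Lg_nestAlgebra (h𝒩 : IsNest 𝒩) {M : ℕ → Submodule ℂ H}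
    (hM𝒩 : ∀ k, M k ∈ 𝒩) (hM : Monotone M) {D : Type*} [Countable D] {f : D → H}
    (hf : Orthonormal ℂ f) (β : D → ℕ) (hfM : ∀ d, f d ∈ nestLayer M (β d))
    (hMf : ∀ k, M k ≤ (span ℂ (Set.range f)).topologicalClosure) (hβ : ∀ c, ∃ d, β d = c + 1)
    (n : ℕ) : ¬ Dense (Lg (nestAlgebra 𝒩) n) := by
  choose g hg using hβ
  obtain ⟨Ψ, hΨ, hβΨ⟩ := exists_injective_uncurry_add_two_le (ι := Fin n) β g hg
  have hfΨ : Orthonormal ℂ (f ∘ Function.uncurry Ψ) := hf.comp _ hΨ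
  have hu : ∀ i, Orthonormal ℂ (f ∘ Ψ i) := fun i => hfΨ.comp _ (Prod.mk_right_injective i)
  set W := (sSup (Set.range M)).topologicalClosure
  have hW𝒩 : W ∈ 𝒩 := h𝒩.span_mem _ (Set.range_subset_iff.2 hM𝒩) (Set.range_nonempty M)
  have hfW : ∀ d, f d ∈ W := fun d =>
    le_topologicalClosure _ <|
      le_sSup (Set.mem_range_self (f := M) (β d + 1)) (nestLayer_le _ (hfM d))
  have hWf : W ≤ (span ℂ (Set.range f)).topologicalClosure :=
    topologicalClosure_minimal _ (sSup_le (Set.forall_mem_range.2 hMf))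
      (isClosed_topologicalClosure _)
  have hS : ∀ j, partialIsometry (hu j) hf ∈ nestAlgebra 𝒩 := fun j =>
    partialIsometry_mem_nestAlgebra h𝒩 (hu j) hf (fun d => M (β (Ψ j d))) (fun _ => hM𝒩 _)
      (fun d => nestLayer_le_orthogonal _ (hfM _))
      (fun d => hM (by have := hβΨ j d; omega) (nestLayer_le _ (hfM d)))
  have hSD : ∀ i j, ∀ y ∈ W, partialIsometry (hu j) hf (partialIsometry hf (hu i) y) =
      if i = j then y else 0 := by
    intro i j y hy
    split_ifs with hij
    · rw [hij, partialIsometry_partialIsometry_apply, partialIsometry_self_apply hf (hWf hy)]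
    · refine partialIsometry_partialIsometry_apply_eq_zero _ _ _ _ (fun d d' => hf.2 ?_) y
      exact fun h => hij (congrArg Prod.fst (hΨ (a₁ := (j, d)) (a₂ := (i, d')) h)).symm
  have hSe : ∀ j, partialIsometry (hu j) hf (f (g 0)) = 0 := fun j =>
    partialIsometry_apply_eq_zero _ _ fun d => hf.2 fun h => by
      have := congrArg β h
      have := hβΨ j d
      simp_all
  intro hdense
  exact not_mem_closure_Lg (A := nestAlgebra 𝒩) (fun T hT y hy => hT W hW𝒩 y hy) hS
    (fun i => norm_partialIsometry_le hf (hu i))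
    (fun i y => partialIsometry_apply_mem _ _ (isClosed_topologicalClosure _) fun _ => .inr (hfW _))
    hSD (hfW (g 0)) (hf.ne_zero _) hSe (hdense.closure_eq ▸ Set.mem_univ _)

end Nest

/-- If a nest contains a strictly increasing sequence of subspaces, the left topological
stable rank of its nest algebra is infinite. -/
theorem stmt15 {H : Type*} [NormedAddCommGroup H] [InnerProductSpace ℂ H] [CompleteSpace H]
    [TopologicalSpace.SeparableSpace H]
    (𝒩 : Set (Submodule ℂ H)) (h𝒩 : IsNest 𝒩)
    (N : ℕ → Submodule ℂ H) (hmem : ∀ k, N k ∈ 𝒩) (hmono : StrictMono N) :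
    ltsr (nestAlgebra 𝒩) = ⊤ := by
  rw [ltsr, sInf_eq_top]
  rintro _ ⟨n, rfl, hdense⟩
  obtain ⟨M, hM0, hMN⟩ : ∃ M : ℕ → Submodule ℂ H, M 0 = ⊥ ∧ ∀ k, M (k + 1) = N k :=
    ⟨fun | 0 => ⊥ | k + 1 => N k, rfl, fun _ => rfl⟩
  have hM𝒩 : ∀ k, M k ∈ 𝒩 := fun | 0 => hM0 ▸ h𝒩.bot_mem | k + 1 => hMN k ▸ hmem k
  have hM : Monotone M := monotone_nat_of_le_succ fun
    | 0 => hM0 ▸ bot_le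
    | k + 1 => by simpa only [hMN] using hmono.monotone k.le_succ
  have hMcl : ∀ k, IsClosed (M k : Set H) := fun k => h𝒩.isClosed _ (hM𝒩 k)
  have : ∀ k, CompleteSpace (M k) := fun k => (hMcl k).completeSpace_coe
  have : ∀ k, CompleteSpace (nestLayer M k) := fun k =>
    (show IsClosed (nestLayer M k : Set H) from
      (hMcl (k + 1)).inter (M k).isClosed_orthogonal).completeSpace_coe
  choose w b _ using fun k => exists_hilbertBasis ℂ (nestLayer M k)
  have hf := orthonormal_layerFamily b hM
  have := hf.countable
  refine absurd hdense (not_dense_Lg_nestAlgebra h𝒩 hM𝒩 hM hf Sigma.fst (layerFamily_mem b)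
    (le_closure_span_layerFamily b hM hM0) (fun c => ?_) n)
  have hlt : M (c + 1) < M (c + 1 + 1) := by simpa only [hMN] using hmono c.lt_succ_self
  have := nontrivial_iff_ne_bot.2 (nestLayer_ne_bot hM hlt)
  obtain ⟨i⟩ := (b (c + 1)).nonempty_index
  exact ⟨⟨c + 1, i⟩, rfl⟩
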